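/- If Q is a downward-closed PEKB, i.e. ↓Q ⊆ Q, then KM erasure postulate E5 holds: for every PEKB P, (P ⊖ Q) ⊔ Q ⊨ P. -/
import Mathlib


/-- Modal formulae over atomic propositions `Atom` and agents `Agt`. -/
inductive Form (Atom Agt : Type) : Type
  | top : Form Atom Agt
  | bot : Form Atom Agt
  | atom : Atom → Form Atom Agt
  | neg : Form Atom Agt → Form Atom Agt
  | and : Form Atom Agt → Form Atom Agt → Form Atom Agt
  | box : Agt → Form Atom Agt → Form Atom Agt

/-- `◇_i φ` abbreviates `¬ B_i ¬ φ`. -/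
def Form.dia {Atom Agt : Type} (i : Agt) (φ : Form Atom Agt) : Form Atom Agt :=
  Form.neg (Form.box i (Form.neg φ))

/-- A Kripke structure: worlds, a valuation, and an accessibility relation per agent. -/
structure Kripke (Atom Agt : Type) where
  W : Type
  val : W → Atom → Prop
  R : Agt → W → W → Prop

/-- Every accessibility relation is serial: every world has a successor. -/
def Kripke.Serial {Atom Agt : Type} (M : Kripke Atom Agt) : Prop :=
  ∀ (i : Agt) (w : M.W), ∃ v : M.W, M.R i w v

/-- Satisfaction of a formula at a world of a Kripke structure. -/
def Sat {Atom Agt : Type} (M : Kripke Atom Agt) : M.W → Form Atom Agt → Prop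
  | _, Form.top => True
  | _, Form.bot => False
  | w, Form.atom p => M.val w p
  | w, Form.neg φ => ¬ Sat M w φ
  | w, Form.and φ ψ => Sat M w φ ∧ Sat M w ψ
  | w, Form.box i φ => ∀ v : M.W, M.R i w v → Sat M v φ

/-- KD_n entailment from a set of formulae: truth at every world of every serial
Kripke structure satisfying all members of `S`. -/
def SetEntails {Atom Agt : Type} (S : Set (Form Atom Agt)) (φ : Form Atom Agt) : Prop :=
  ∀ (M : Kripke Atom Agt), M.Serial → ∀ w : M.W, (∀ ψ ∈ S, Sat M w ψ) → Sat M w φ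

/-- KD_n entailment between single formulae. -/
def Entails {Atom Agt : Type} (φ ψ : Form Atom Agt) : Prop :=
  SetEntails {φ} ψ

/-- A set of formulae is consistent iff all its members hold simultaneously at
some world of some serial Kripke structure. -/
def Consistent {Atom Agt : Type} (S : Set (Form Atom Agt)) : Prop :=
  ∃ (M : Kripke Atom Agt), M.Serial ∧ ∃ w : M.W, ∀ ψ ∈ S, Sat M w ψ

/-- Restricted modal literals: a (possibly empty) sequence of `B_i`/`◇_i`
operators applied to a propositional literal. -/
inductive IsRML {Atom Agt : Type} : Form Atom Agt → Prop
  | pos (p : Atom) : IsRML (Form.atom p)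
  | neg (p : Atom) : IsRML (Form.neg (Form.atom p))
  | box (i : Agt) {φ : Form Atom Agt} : IsRML φ → IsRML (Form.box i φ)
  | dia (i : Agt) {φ : Form Atom Agt} : IsRML φ → IsRML (Form.dia i φ)

/-- A proper epistemic knowledge base: a finite set of RMLs. -/
def IsPEKB {Atom Agt : Type} (S : Set (Form Atom Agt)) : Prop :=
  S.Finite ∧ ∀ φ ∈ S, IsRML φ

/-- Entailment of every member of a set (PEKB) from a set. -/
def KBEntails {Atom Agt : Type} (S T : Set (Form Atom Agt)) : Prop :=
  ∀ φ ∈ T, SetEntails S φ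

/-- Logical equivalence of two sets of formulae. -/
def KBEquiv {Atom Agt : Type} (S T : Set (Form Atom Agt)) : Prop :=
  KBEntails S T ∧ KBEntails T S

/-- Upward closure: the RMLs entailed by some member of `S`. -/
def upSet {Atom Agt : Type} (S : Set (Form Atom Agt)) : Set (Form Atom Agt) :=
  {ψ | IsRML ψ ∧ ∃ φ ∈ S, Entails φ ψ}

/-- Downward closure: the RMLs entailing some member of `S`. -/
def downSet {Atom Agt : Type} (S : Set (Form Atom Agt)) : Set (Form Atom Agt) :=
  {ψ | IsRML ψ ∧ ∃ φ ∈ S, Entails ψ φ}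

/-- Maximal elements of a set of RMLs under entailment. -/
def maxSet {Atom Agt : Type} (S : Set (Form Atom Agt)) : Set (Form Atom Agt) :=
  {φ ∈ S | ∀ ψ ∈ S, Entails ψ φ → Entails φ ψ}

/-- NNF-negation of an RML: push the negation through the modalities. -/
def nnfNeg {Atom Agt : Type} : Form Atom Agt → Form Atom Agt
  | Form.atom p => Form.neg (Form.atom p)
  | Form.neg (Form.atom p) => Form.atom p
  | Form.neg (Form.box i (Form.neg φ)) => Form.box i (nnfNeg φ)
  | Form.box i φ => Form.dia i (nnfNeg φ)
  | φ => φ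

/-- NNF-negation of every member of a PEKB. -/
def negKB {Atom Agt : Type} (S : Set (Form Atom Agt)) : Set (Form Atom Agt) :=
  nnfNeg '' S

/-- Belief erasure: `P ⊖ Q = max(↑P ∖ ↓Q)`. -/
def eraseKB {Atom Agt : Type} (P Q : Set (Form Atom Agt)) : Set (Form Atom Agt) :=
  maxSet (upSet P \ downSet Q)

/-- Belief update: `P ⋄ Q = max((P ⊖ ¬Q) ∪ Q)`. -/
def updateKB {Atom Agt : Type} (P Q : Set (Form Atom Agt)) : Set (Form Atom Agt) :=
  maxSet (eraseKB P (negKB Q) ∪ Q)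

/-- Meet: `P ⊓ Q = max(↑P ∩ ↑Q)`. -/
def meetKB {Atom Agt : Type} (P Q : Set (Form Atom Agt)) : Set (Form Atom Agt) :=
  maxSet (upSet P ∩ upSet Q)


section E5Aux

variable {Atom Agt : Type}

lemma entails_refl (φ : Form Atom Agt) : Entails φ φ := by
  intro M hs w h; exact h φ rfl

lemma entails_trans {a b c : Form Atom Agt} (h1 : Entails a b) (h2 : Entails b c) :
    Entails a c := by
  intro M hs w h
  exact h2 M hs w (fun ψ hψ => by cases hψ; exact h1 M hs w h)

/-- number of diamonds in an RML -/
def diaCnt : Form Atom Agt → ℕ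
  | .neg (.box _ (.neg φ)) => diaCnt φ + 1
  | .box _ φ => diaCnt φ
  | _ => 0

lemma diaCnt_box (i : Agt) (φ : Form Atom Agt) : diaCnt (Form.box i φ) = diaCnt φ := by
  simp [diaCnt]

lemma diaCnt_dia (i : Agt) (φ : Form Atom Agt) :
    diaCnt (Form.neg (Form.box i (Form.neg φ))) = diaCnt φ + 1 := by
  simp [diaCnt]

/-- syntactic strengthening between RMLs -/
inductive Stronger : Form Atom Agt → Form Atom Agt → Prop
  | pos (p : Atom) : Stronger (.atom p) (.atom p)
  | neg (p : Atom) : Stronger (.neg (.atom p)) (.neg (.atom p))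
  | boxbox (i : Agt) {a b : Form Atom Agt} : Stronger a b → Stronger (.box i a) (.box i b)
  | boxdia (i : Agt) {a b : Form Atom Agt} :
      Stronger a b → Stronger (.box i a) (.neg (.box i (.neg b)))
  | diadia (i : Agt) {a b : Form Atom Agt} :
      Stronger a b → Stronger (.neg (.box i (.neg a))) (.neg (.box i (.neg b)))

/-- syntactic contradiction between RMLs -/
inductive Contr : Form Atom Agt → Form Atom Agt → Prop
  | pn (p : Atom) : Contr (.atom p) (.neg (.atom p))
  | np (p : Atom) : Contr (.neg (.atom p)) (.atom p)
  | bb (i : Agt) {a b : Form Atom Agt} : Contr a b → Contr (.box i a) (.box i b)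
  | bd (i : Agt) {a b : Form Atom Agt} :
      Contr a b → Contr (.box i a) (.neg (.box i (.neg b)))
  | db (i : Agt) {a b : Form Atom Agt} :
      Contr a b → Contr (.neg (.box i (.neg a))) (.box i b)

lemma stronger_diaCnt {a b : Form Atom Agt} (h : Stronger a b) : diaCnt a ≤ diaCnt b := by
  induction h with
  | pos p => exact le_refl _
  | neg p => exact le_refl _
  | boxbox i h ih => rw [diaCnt_box, diaCnt_box]; exact ih
  | boxdia i h ih => rw [diaCnt_box, diaCnt_dia]; omega
  | diadia i h ih => rw [diaCnt_dia, diaCnt_dia]; omega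

lemma stronger_eq_or_lt {a b : Form Atom Agt} (h : Stronger a b) :
    a = b ∨ diaCnt a < diaCnt b := by
  induction h with
  | pos p => exact Or.inl rfl
  | neg p => exact Or.inl rfl
  | boxbox i h ih =>
    rcases ih with rfl | hlt
    · exact Or.inl rfl
    · right; rw [diaCnt_box, diaCnt_box]; exact hlt
  | boxdia i h ih =>
    right; rw [diaCnt_box, diaCnt_dia]
    have := stronger_diaCnt h; omega
  | diadia i h ih =>
    rcases ih with rfl | hlt
    · exact Or.inl rfl
    · right; rw [diaCnt_dia, diaCnt_dia]; omega

lemma nnfNeg_atom (p : Atom) :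
    (nnfNeg (Form.atom p) : Form Atom Agt) = Form.neg (Form.atom p) := rfl

lemma nnfNeg_negatom (p : Atom) :
    (nnfNeg (Form.neg (Form.atom p)) : Form Atom Agt) = Form.atom p := rfl

lemma nnfNeg_box (i : Agt) (φ : Form Atom Agt) :
    nnfNeg (Form.box i φ) = Form.neg (Form.box i (Form.neg (nnfNeg φ))) := rfl

lemma nnfNeg_dia (i : Agt) (φ : Form Atom Agt) :
    nnfNeg (Form.dia i φ) = Form.box i (nnfNeg φ) := rfl

lemma nnfNeg_isRML {φ : Form Atom Agt} (h : IsRML φ) : IsRML (nnfNeg φ) := by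
  induction h with
  | pos p => exact .neg p
  | neg p => exact .pos p
  | box i h ih => exact .dia i ih
  | dia i h ih => exact .box i ih

lemma sat_nnfNeg {φ : Form Atom Agt} (h : IsRML φ) (M : Kripke Atom Agt) :
    ∀ w, Sat M w (nnfNeg φ) ↔ ¬ Sat M w φ := by
  induction h with
  | pos p => intro w; exact Iff.rfl
  | neg p => intro w; rw [nnfNeg_negatom]; simp [Sat]
  | box i h ih =>
    intro w
    rw [nnfNeg_box]
    constructor
    · intro hx hall
      exact hx (fun v hv hs => (ih v).mp hs (hall v hv))
    · intro hx hall
      exact hx (fun v hv => by_contra fun hns => hall v hv ((ih v).mpr hns))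
  | dia i h ih =>
    intro w
    rw [nnfNeg_dia]
    constructor
    · intro hx hnd
      exact hnd (fun v hv => (ih v).mp (hx v hv))
    · intro hx v hv
      exact (ih v).mpr (fun hs => (not_not.mp hx) v hv hs)

lemma contr_nnf {b : Form Atom Agt} (hb : IsRML b) :
    ∀ {a : Form Atom Agt}, Contr a (nnfNeg b) → Stronger a b := by
  induction hb with
  | pos p =>
    intro a hc
    rw [nnfNeg_atom] at hc
    cases hc with
    | pn => exact .pos p
  | neg p =>
    intro a hc
    rw [nnfNeg_negatom] at hc
    cases hc with
    | np => exact .neg p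
  | box i h ih =>
    intro a hc
    rw [nnfNeg_box] at hc
    cases hc with
    | bd i hc' => exact .boxbox i (ih hc')
  | dia i h ih =>
    intro a hc
    rw [nnfNeg_dia] at hc
    cases hc with
    | bb i hc' => exact .boxdia i (ih hc')
    | db i hc' => exact .diadia i (ih hc')

/-! ### Countermodel constructions -/

inductive GW (W1 W2 : Type) : Type
  | root : GW W1 W2
  | dummy : GW W1 W2
  | left : W1 → GW W1 W2
  | right : W2 → GW W1 W2

def glue (M1 M2 : Kripke Atom Agt) (w1 : M1.W) (w2 : M2.W)
    (f : Atom → Prop) (ρ1 ρ2 : Agt → Prop) : Kripke Atom Agt where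
  W := GW M1.W M2.W
  val x p := match x with
    | .left v => M1.val v p
    | .right v => M2.val v p
    | _ => f p
  R j x y := match x, y with
    | .root, .left v => ρ1 j ∧ v = w1
    | .root, .right v => ρ2 j ∧ v = w2
    | .root, .dummy => ¬ ρ1 j ∧ ¬ ρ2 j
    | .dummy, .dummy => True
    | .left v, .left v' => M1.R j v v'
    | .right v, .right v' => M2.R j v v'
    | _, _ => False

variable {M1 M2 : Kripke Atom Agt} {w1 : M1.W} {w2 : M2.W}
  {f : Atom → Prop} {ρ1 ρ2 : Agt → Prop}

lemma glue_serial (h1 : M1.Serial) (h2 : M2.Serial) :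
    (glue M1 M2 w1 w2 f ρ1 ρ2).Serial := by
  intro j x
  cases x with
  | root =>
    by_cases hr1 : ρ1 j
    · exact ⟨.left w1, hr1, rfl⟩
    · by_cases hr2 : ρ2 j
      · exact ⟨.right w2, hr2, rfl⟩
      · exact ⟨.dummy, hr1, hr2⟩
  | dummy => exact ⟨.dummy, trivial⟩
  | left v => obtain ⟨v', hv'⟩ := h1 j v; exact ⟨.left v', hv'⟩
  | right v => obtain ⟨v', hv'⟩ := h2 j v; exact ⟨.right v', hv'⟩

lemma sat_left (χ : Form Atom Agt) :
    ∀ v, Sat (glue M1 M2 w1 w2 f ρ1 ρ2) (.left v) χ ↔ Sat M1 v χ := by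
  induction χ with
  | top => intro v; exact Iff.rfl
  | bot => intro v; exact Iff.rfl
  | atom p => intro v; exact Iff.rfl
  | neg φ ih => intro v; exact not_congr (ih v)
  | and φ ψ ih1 ih2 => intro v; exact and_congr (ih1 v) (ih2 v)
  | box j φ ih =>
    intro v
    constructor
    · intro h u hu
      exact (ih u).mp (h (.left u) hu)
    · intro h y hy
      cases y with
      | left u => exact (ih u).mpr (h u hy)
      | root => exact hy.elim
      | dummy => exact hy.elim
      | right u => exact hy.elim

lemma sat_right (χ : Form Atom Agt) :
    ∀ v, Sat (glue M1 M2 w1 w2 f ρ1 ρ2) (.right v) χ ↔ Sat M2 v χ := by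
  induction χ with
  | top => intro v; exact Iff.rfl
  | bot => intro v; exact Iff.rfl
  | atom p => intro v; exact Iff.rfl
  | neg φ ih => intro v; exact not_congr (ih v)
  | and φ ψ ih1 ih2 => intro v; exact and_congr (ih1 v) (ih2 v)
  | box j φ ih =>
    intro v
    constructor
    · intro h u hu
      exact (ih u).mp (h (.right u) hu)
    · intro h y hy
      cases y with
      | right u => exact (ih u).mpr (h u hy)
      | root => exact hy.elim
      | dummy => exact hy.elim
      | left u => exact hy.elim

lemma root_box1 {j : Agt} {χ : Form Atom Agt} (hr1 : ρ1 j) (hr2 : ¬ ρ2 j)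
    (h : Sat M1 w1 χ) :
    Sat (glue M1 M2 w1 w2 f ρ1 ρ2) .root (Form.box j χ) := by
  intro y hy
  cases y with
  | root => exact hy.elim
  | dummy => exact absurd hr1 hy.1
  | left v => cases hy.2; exact (sat_left χ w1).mpr h
  | right v => exact absurd hy.1 hr2

lemma root_box2 {j : Agt} {χ : Form Atom Agt} (hr1 : ¬ ρ1 j) (hr2 : ρ2 j)
    (h : Sat M2 w2 χ) :
    Sat (glue M1 M2 w1 w2 f ρ1 ρ2) .root (Form.box j χ) := by
  intro y hy
  cases y with
  | root => exact hy.elim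
  | dummy => exact absurd hr2 hy.2
  | right v => cases hy.2; exact (sat_right χ w2).mpr h
  | left v => exact absurd hy.1 hr1

lemma root_dia1 {j : Agt} {χ : Form Atom Agt} (hr1 : ρ1 j) (h : Sat M1 w1 χ) :
    Sat (glue M1 M2 w1 w2 f ρ1 ρ2) .root (Form.neg (Form.box j (Form.neg χ))) := by
  intro hall
  exact hall (.left w1) ⟨hr1, rfl⟩ ((sat_left χ w1).mpr h)

lemma root_dia2 {j : Agt} {χ : Form Atom Agt} (hr2 : ρ2 j) (h : Sat M2 w2 χ) :
    Sat (glue M1 M2 w1 w2 f ρ1 ρ2) .root (Form.neg (Form.box j (Form.neg χ))) := by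
  intro hall
  exact hall (.right w2) ⟨hr2, rfl⟩ ((sat_right χ w2).mpr h)

def triv (f : Atom → Prop) : Kripke Atom Agt :=
  ⟨Unit, fun _ => f, fun _ _ _ => True⟩

lemma triv_serial : (triv (Atom := Atom) (Agt := Agt) f).Serial :=
  fun _ _ => ⟨(), trivial⟩

lemma rml_sat {χ : Form Atom Agt} (h : IsRML χ) :
    ∃ M : Kripke Atom Agt, M.Serial ∧ ∃ w, Sat M w χ := by
  induction h with
  | pos p => exact ⟨triv fun _ => True, triv_serial, (), trivial⟩
  | neg p => exact ⟨triv fun _ => False, triv_serial, (), fun h => h⟩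
  | box i h ih =>
    obtain ⟨M, hs, w, hw⟩ := ih
    exact ⟨glue M M w w (fun _ => True) (· = i) (fun _ => False),
      glue_serial hs hs, .root, root_box1 rfl not_false hw⟩
  | dia i h ih =>
    obtain ⟨M, hs, w, hw⟩ := ih
    exact ⟨glue M M w w (fun _ => True) (· = i) (fun _ => False),
      glue_serial hs hs, .root, root_dia1 rfl hw⟩

lemma pair_sat {a : Form Atom Agt} (ha : IsRML a) :
    ∀ {b : Form Atom Agt}, IsRML b → ¬ Contr a b →
      ∃ M : Kripke Atom Agt, M.Serial ∧ ∃ w, Sat M w a ∧ Sat M w b := by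
  induction ha with
  | pos p =>
    intro b hb hnc
    cases hb with
    | pos q =>
      exact ⟨triv fun r => r = p ∨ r = q, triv_serial, (), Or.inl rfl, Or.inr rfl⟩
    | neg q =>
      have hpq : p ≠ q := fun h => hnc (h ▸ Contr.pn p)
      exact ⟨triv (· = p), triv_serial, (), rfl, fun h => hpq h.symm⟩
    | box i hb' =>
      obtain ⟨M, hs, w, hw⟩ := rml_sat hb'
      exact ⟨glue M M w w (· = p) (· = i) (fun _ => False), glue_serial hs hs,
        .root, rfl, root_box1 rfl not_false hw⟩
    | dia i hb' =>
      obtain ⟨M, hs, w, hw⟩ := rml_sat hb'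
      exact ⟨glue M M w w (· = p) (· = i) (fun _ => False), glue_serial hs hs,
        .root, rfl, root_dia1 rfl hw⟩
  | neg p =>
    intro b hb hnc
    cases hb with
    | pos q =>
      have hpq : p ≠ q := fun h => hnc (h ▸ Contr.np p)
      exact ⟨triv (· = q), triv_serial, (), fun h => hpq h, rfl⟩
    | neg q =>
      exact ⟨triv fun _ => False, triv_serial, (), fun h => h, fun h => h⟩
    | box i hb' =>
      obtain ⟨M, hs, w, hw⟩ := rml_sat hb'
      exact ⟨glue M M w w (fun _ => False) (· = i) (fun _ => False), glue_serial hs hs,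
        .root, fun h => h, root_box1 rfl not_false hw⟩
    | dia i hb' =>
      obtain ⟨M, hs, w, hw⟩ := rml_sat hb'
      exact ⟨glue M M w w (fun _ => False) (· = i) (fun _ => False), glue_serial hs hs,
        .root, fun h => h, root_dia1 rfl hw⟩
  | box i ha' ih =>
    intro b hb hnc
    cases hb with
    | pos q =>
      obtain ⟨M, hs, w, hw⟩ := rml_sat ha'
      exact ⟨glue M M w w (· = q) (· = i) (fun _ => False), glue_serial hs hs,
        .root, root_box1 rfl not_false hw, rfl⟩
    | neg q =>
      obtain ⟨M, hs, w, hw⟩ := rml_sat ha'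
      exact ⟨glue M M w w (fun _ => False) (· = i) (fun _ => False), glue_serial hs hs,
        .root, root_box1 rfl not_false hw, fun h => h⟩
    | @box j b' hb' =>
      by_cases hij : i = j
      · subst hij
        have hnc' : ¬ Contr _ b' := fun hc => hnc (Contr.bb i hc)
        obtain ⟨M, hs, w, h1, h2⟩ := ih hb' hnc'
        exact ⟨glue M M w w (fun _ => False) (· = i) (fun _ => False), glue_serial hs hs,
          .root, root_box1 rfl not_false h1, root_box1 rfl not_false h2⟩
      · obtain ⟨N1, hs1, u1, h1⟩ := rml_sat ha'
        obtain ⟨N2, hs2, u2, h2⟩ := rml_sat hb'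
        exact ⟨glue N1 N2 u1 u2 (fun _ => False) (· = i) (· = j), glue_serial hs1 hs2,
          .root, root_box1 rfl hij h1, root_box2 (fun h => hij h.symm) rfl h2⟩
    | @dia j b' hb' =>
      by_cases hij : i = j
      · subst hij
        have hnc' : ¬ Contr _ b' := fun hc => hnc (Contr.bd i hc)
        obtain ⟨M, hs, w, h1, h2⟩ := ih hb' hnc'
        exact ⟨glue M M w w (fun _ => False) (· = i) (fun _ => False), glue_serial hs hs,
          .root, root_box1 rfl not_false h1, root_dia1 rfl h2⟩
      · obtain ⟨N1, hs1, u1, h1⟩ := rml_sat ha'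
        obtain ⟨N2, hs2, u2, h2⟩ := rml_sat hb'
        exact ⟨glue N1 N2 u1 u2 (fun _ => False) (· = i) (· = j), glue_serial hs1 hs2,
          .root, root_box1 rfl hij h1, root_dia2 rfl h2⟩
  | dia i ha' ih =>
    intro b hb hnc
    cases hb with
    | pos q =>
      obtain ⟨M, hs, w, hw⟩ := rml_sat ha'
      exact ⟨glue M M w w (· = q) (· = i) (fun _ => False), glue_serial hs hs,
        .root, root_dia1 rfl hw, rfl⟩
    | neg q =>
      obtain ⟨M, hs, w, hw⟩ := rml_sat ha'
      exact ⟨glue M M w w (fun _ => False) (· = i) (fun _ => False), glue_serial hs hs,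
        .root, root_dia1 rfl hw, fun h => h⟩
    | @box j b' hb' =>
      by_cases hij : i = j
      · subst hij
        have hnc' : ¬ Contr _ b' := fun hc => hnc (Contr.db i hc)
        obtain ⟨M, hs, w, h1, h2⟩ := ih hb' hnc'
        exact ⟨glue M M w w (fun _ => False) (· = i) (fun _ => False), glue_serial hs hs,
          .root, root_dia1 rfl h1, root_box1 rfl not_false h2⟩
      · obtain ⟨N1, hs1, u1, h1⟩ := rml_sat ha'
        obtain ⟨N2, hs2, u2, h2⟩ := rml_sat hb'
        exact ⟨glue N1 N2 u1 u2 (fun _ => False) (· = i) (· = j), glue_serial hs1 hs2,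
          .root, root_dia1 rfl h1, root_box2 (fun h => hij h.symm) rfl h2⟩
    | @dia j b' hb' =>
      obtain ⟨N1, hs1, u1, h1⟩ := rml_sat ha'
      obtain ⟨N2, hs2, u2, h2⟩ := rml_sat hb'
      exact ⟨glue N1 N2 u1 u2 (fun _ => False) (· = i) (· = j), glue_serial hs1 hs2,
        .root, root_dia1 rfl h1, root_dia2 rfl h2⟩

lemma entails_stronger {a b : Form Atom Agt} (ha : IsRML a) (hb : IsRML b)
    (h : Entails a b) : Stronger a b := by
  by_contra hs
  have hnc : ¬ Contr a (nnfNeg b) := fun hc => hs (contr_nnf hb hc)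
  obtain ⟨M, hser, w, h1, h2⟩ := pair_sat ha (nnfNeg_isRML hb) hnc
  have hsat : Sat M w b := h M hser w (fun ψ hψ => by cases hψ; exact h1)
  exact (sat_nnfNeg hb M w).mp h2 hsat

lemma exists_max {D : Set (Form Atom Agt)} (hD : ∀ ψ ∈ D, IsRML ψ) :
    ∀ (n : ℕ) (φ : Form Atom Agt), φ ∈ D → diaCnt φ ≤ n →
      ∃ χ ∈ maxSet D, Entails χ φ := by
  intro n
  induction n using Nat.strong_induction_on with
  | _ n ihn =>
    intro φ hφ hn
    by_cases hmax : ∀ ψ ∈ D, Entails ψ φ → Entails φ ψ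
    · exact ⟨φ, ⟨hφ, hmax⟩, entails_refl φ⟩
    · push_neg at hmax
      obtain ⟨ψ, hψD, hent, hnent⟩ := hmax
      have hne : ψ ≠ φ := by rintro rfl; exact hnent hent
      have hstr : Stronger ψ φ := entails_stronger (hD ψ hψD) (hD φ hφ) hent
      have hlt : diaCnt ψ < diaCnt φ := (stronger_eq_or_lt hstr).resolve_left hne
      obtain ⟨χ, hχ, hcψ⟩ := ihn (diaCnt ψ) (lt_of_lt_of_le hlt hn) ψ hψD le_rfl
      exact ⟨χ, hχ, entails_trans hcψ hent⟩

end E5Aux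

/-- If `Q` is a downward-closed PEKB (`↓Q ⊆ Q`), then KM
erasure postulate E5 holds: for every PEKB `P`, `(P ⊖ Q) ⊔ Q ⊨ P`. -/
theorem km_erasure_e5_downward_closed {Atom Agt : Type}
    (Q : Set (Form Atom Agt)) (hQ : IsPEKB Q) (hdc : downSet Q ⊆ Q)
    (P : Set (Form Atom Agt)) (hP : IsPEKB P) :
    KBEntails (eraseKB P Q ∪ Q) P := by
  intro φ hφP
  have hrml : IsRML φ := hP.2 φ hφP
  by_cases hdown : φ ∈ downSet Q
  · intro M hs w hw
    exact hw φ (Or.inr (hdc hdown))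
  · have hD : φ ∈ upSet P \ downSet Q :=
      ⟨⟨hrml, φ, hφP, entails_refl φ⟩, hdown⟩
    have hDrml : ∀ ψ ∈ upSet P \ downSet Q, IsRML ψ := fun ψ hψ => hψ.1.1
    obtain ⟨χ, hχmax, hent⟩ := exists_max hDrml (diaCnt φ) φ hD le_rfl
    intro M hs w hw
    exact hent M hs w (fun ψ hψ => by cases hψ; exact hw _ (Or.inl hχmax))
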